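/- arXiv:1402.5505 — 5 statements merged into one kernel-verified Lean document; each statement's English description precedes it below -/
import Mathlib

section
/- Let a_1, ..., a_{mn+1} be integers among which some m+1 of them are pairwise congruent modulo n, let t_1,...,t_m be nonzero complex numbers, and let ω be a primitive n-th root of unity. Then the (mn)×(mn) matrix with rows indexed by k = 1,...,mn and columns indexed by pairs (j,i) with 0 ≤ j < n, 1 ≤ i ≤ m, whose (k,(j,i)) entry is (ω^j t_i)^{a_k}, has determinant zero. -/
open Finset

/-- If among the integer exponents `a k` (indexed by an `mn`-element type)
some `m + 1` are pairwise congruent modulo `n`, then the `mn × mn` matrix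
with entries `(ω^j tᵢ)^(a k)` (columns indexed by pairs `(j, i)`,
`0 ≤ j < n`, `1 ≤ i ≤ m`, `ω` a primitive `n`-th root of unity, `tᵢ ≠ 0`)
has determinant zero. -/
theorem det_weyl_numerator_eq_zero (m n : ℕ) (ω : ℂ)
    (hω : IsPrimitiveRoot ω n) (t : Fin m → ℂ) (ht : ∀ i, t i ≠ 0)
    (a : Fin n × Fin m → ℤ)
    (hcong : ∃ s : Finset (Fin n × Fin m), s.card = m + 1 ∧
      ∀ k ∈ s, ∀ l ∈ s, a k ≡ a l [ZMOD n]) :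
    Matrix.det (Matrix.of fun k c : Fin n × Fin m =>
        (ω ^ (c.1 : ℕ) * t c.2) ^ (a k)) = 0 := by
  obtain ⟨s, hs, hc⟩ := hcong
  -- n must be positive, since s is nonempty
  rcases Nat.eq_zero_or_pos n with hn | hn
  · subst hn
    have : s = ∅ := Finset.eq_empty_of_isEmpty s
    simp [this] at hs
  have hω0 : ω ≠ 0 := by
    intro h
    have := hω.pow_eq_one
    rw [h, zero_pow hn.ne'] at this
    exact zero_ne_one this
  obtain ⟨k0, hk0⟩ : s.Nonempty := Finset.card_pos.mp (by omega)
  set ζ : ℂ := ω ^ (a k0) with hζ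
  -- all rows in s have the same ω-power
  have hrow : ∀ k ∈ s, ω ^ (a k) = ζ := by
    intro k hk
    have hmod : a k ≡ a k0 [ZMOD n] := hc k hk k0 hk0
    obtain ⟨d, hd⟩ := Int.ModEq.dvd hmod
    have : a k = a k0 + n * (-d) := by linarith
    rw [this, zpow_add₀ hω0, zpow_mul, zpow_natCast, hω.pow_eq_one, one_zpow, mul_one]
  -- the linear map v ↦ (i ↦ ∑ k ∈ s, v k * t i ^ a k) has a nontrivial kernel
  let f : (↥s → ℂ) →ₗ[ℂ] (Fin m → ℂ) :=
    { toFun := fun v i => ∑ k : ↥s, v k * t i ^ (a k.1)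
      map_add' := by
        intro x y
        funext i
        simp [add_mul, Finset.sum_add_distrib]
      map_smul' := by
        intro c x
        funext i
        simp [Finset.mul_sum, mul_assoc] }
  have hninj : ¬ Function.Injective f := by
    intro hinj
    have h1 : Module.finrank ℂ (↥s → ℂ) ≤ Module.finrank ℂ (Fin m → ℂ) :=
      LinearMap.finrank_le_finrank_of_injective hinj
    simp only [Module.finrank_pi, Fintype.card_coe, hs, Fintype.card_fin] at h1
    omega
  rw [Function.not_injective_iff] at hninj
  obtain ⟨x, y, hxy, hne⟩ := hninj
  set v : ↥s → ℂ := x - y with hv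
  have hfv : f v = 0 := by
    rw [hv, map_sub, hxy, sub_self]
  have hvne : v ≠ 0 := sub_ne_zero_of_ne hne
  -- extend v by zero
  set w : Fin n × Fin m → ℂ := fun k => if h : k ∈ s then v ⟨k, h⟩ else 0 with hw
  rw [← Matrix.exists_vecMul_eq_zero_iff]
  refine ⟨w, ?_, ?_⟩
  · intro h0
    apply hvne
    funext k
    have := congrFun h0 k.1
    simpa [hw, k.2] using this
  · funext c
    simp only [Matrix.vecMul, dotProduct, Matrix.of_apply, Pi.zero_apply]
    have hsum : ∑ k : Fin n × Fin m, w k * (ω ^ (c.1 : ℕ) * t c.2) ^ (a k)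
        = ∑ k ∈ s, w k * (ω ^ (c.1 : ℕ) * t c.2) ^ (a k) := by
      refine (Finset.sum_subset (Finset.subset_univ s) ?_).symm
      intro k _ hk
      simp [hw, hk]
    rw [hsum, ← Finset.sum_attach s fun k => w k * (ω ^ (c.1 : ℕ) * t c.2) ^ (a k)]
    have key : ∀ k : ↥s, w k * (ω ^ (c.1 : ℕ) * t c.2) ^ (a k.1)
        = ζ ^ (c.1 : ℕ) * (v k * t c.2 ^ (a k.1)) := by
      intro k
      have h1 : (ω ^ (c.1 : ℕ) * t c.2) ^ (a k.1)
          = (ω ^ (a k.1)) ^ (c.1 : ℕ) * t c.2 ^ (a k.1) := by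
        rw [mul_zpow, ← zpow_natCast ω (c.1 : ℕ), ← zpow_mul, mul_comm ((c.1 : ℕ) : ℤ),
          zpow_mul, zpow_natCast]
      rw [h1, hrow k.1 k.2, hw]
      simp only [k.2, dif_pos]
      ring
    rw [Finset.sum_congr rfl fun k _ => key k, ← Finset.mul_sum]
    have : ∑ k : ↥s, v k * t c.2 ^ (a k.1) = 0 := congrFun hfv c.2
    rw [Finset.univ_eq_attach] at this
    rw [this, mul_zero]
end

section
/- Let λ_1 ≥ λ_2 ≥ λ_3 ≥ λ_4 be integers such that among λ_1+3, λ_2+2, λ_3+1, λ_4 the number of even integers is not exactly 2. Then the character of the irreducible GL_4(ℂ)-representation with highest weight (λ_1,λ_2,λ_3,λ_4) vanishes at every diagonal element of the form (t_1, t_2, −t_1, −t_2) with t_1, t_2 nonzero and t_1² ≠ t_2². -/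
/-!
With `x = (t₁, t₂, -t₁, -t₂)` and `eᵢ = λᵢ + 4 - i`, row `i` of the Weyl numerator `(x_j ^ eᵢ)_j`
is `t₁ ^ eᵢ • (1, 0, σ, 0) + t₂ ^ eᵢ • (0, 1, 0, σ)` with `σ = (-1) ^ eᵢ`. So the rows with even
exponent lie in one plane and those with odd exponent in another; unless exactly two exponents
are even, one of these planes contains three rows, and the numerator determinant vanishes.
-/

open Finset

/-- The character (Schur function) of the irreducible representation of
`GL_N(ℂ)` with highest weight `λ₁ ≥ ⋯ ≥ λ_N`, as a ratio of the Weyl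
numerator determinant `det (x_j ^ (λ_i + N - i))` by the Vandermonde
determinant `∏_{i<j} (x_i - x_j)`. -/
noncomputable def schurChar (N : ℕ) (lam : Fin N → ℤ) (x : Fin N → ℂ) : ℂ :=
  (Matrix.of fun i j : Fin N => x j ^ (lam i + (N : ℤ) - 1 - (i : ℕ))).det /
    ∏ i : Fin N, ∏ j ∈ Ioi i, (x i - x j)

open Module

theorem Matrix.det_eq_zero_of_rows_mem {K n : Type*} [Field K] [Fintype n] [DecidableEq n]
    {M : Matrix n n K} {W : Submodule K (n → K)} {s : Finset n}
    (hs : ∀ i ∈ s, M i ∈ W) (hW : finrank K W < #s) : M.det = 0 := by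
  refine det_eq_zero_of_not_linearIndependent_rows fun hli => hW.not_ge ?_
  have hrows : LinearIndependent K fun i : s => (⟨M i, hs i i.2⟩ : W) :=
    .of_comp W.subtype (hli.comp _ Subtype.val_injective)
  simpa using hrows.fintype_card_le_finrank

theorem lt_card_filter_or_lt_card_filter_not {α : Type*} [Fintype α] {m : ℕ}
    (hα : Fintype.card α = 2 * m) (p : α → Prop) [DecidablePred p] (hp : #{a | p a} ≠ m) :
    m < #{a | p a} ∨ m < #{a | ¬p a} := by
  have := card_filter_add_card_filter_not (s := univ) fun a => p a
  rw [card_univ] at this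
  omega

section

variable {K : Type*} [Field K]

def signedPairSpan (s : K) : Submodule K (Fin 4 → K) :=
  Submodule.span K (Set.range ![![1, 0, s, 0], ![0, 1, 0, s]])

theorem finrank_signedPairSpan_le (s : K) : finrank K (signedPairSpan s) ≤ 2 :=
  finrank_range_le_card _

theorem zpow_mem_signedPairSpan (a b : K) (e : ℤ) :
    (fun j => ![a, b, -a, -b] j ^ e) ∈ signedPairSpan ((-1) ^ e) := by
  have hrow : (fun j => ![a, b, -a, -b] j ^ e) =
      a ^ e • ![1, 0, (-1) ^ e, 0] + b ^ e • ![0, 1, 0, (-1) ^ e] := by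
    have hneg (c : K) : (-c) ^ e = (-1) ^ e * c ^ e := by rw [neg_eq_neg_one_mul, mul_zpow]
    ext j
    fin_cases j <;> simp [hneg a, hneg b, mul_comm]
  rw [hrow]
  exact add_mem (Submodule.smul_mem _ _ (Submodule.subset_span ⟨0, rfl⟩))
    (Submodule.smul_mem _ _ (Submodule.subset_span ⟨1, rfl⟩))

theorem det_zpow_signedPair_eq_zero (a b : K) (e : Fin 4 → ℤ) (he : #{i | Even (e i)} ≠ 2) :
    (Matrix.of fun i j => ![a, b, -a, -b] j ^ e i).det = 0 := by
  rcases lt_card_filter_or_lt_card_filter_not (by simp) _ he with heven | hodd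
  · refine Matrix.det_eq_zero_of_rows_mem (W := signedPairSpan 1) (fun i hi => ?_)
      ((finrank_signedPairSpan_le _).trans_lt heven)
    rw [← (mem_filter.1 hi).2.neg_one_zpow]
    exact zpow_mem_signedPairSpan a b (e i)
  · refine Matrix.det_eq_zero_of_rows_mem (W := signedPairSpan (-1)) (fun i hi => ?_)
      ((finrank_signedPairSpan_le _).trans_lt hodd)
    rw [← (Int.not_even_iff_odd.1 (mem_filter.1 hi).2).neg_one_zpow]
    exact zpow_mem_signedPairSpan a b (e i)

end

theorem gl4_char_vanishes_general (lam : Fin 4 → ℤ)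
    (hpar : (univ.filter fun i : Fin 4 =>
        Even (lam i + (3 - (i : ℕ) : ℤ))).card ≠ 2)
    (t₁ t₂ : ℂ) :
    schurChar 4 lam ![t₁, t₂, -t₁, -t₂] = 0 := by
  have hexp : ∀ i : Fin 4, lam i + ((4 : ℕ) : ℤ) - 1 - (i : ℕ) = lam i + (3 - (i : ℕ) : ℤ) :=
    fun i => by push_cast; ring
  simp only [schurChar, hexp, det_zpow_signedPair_eq_zero t₁ t₂ _ hpar, zero_div]

/-- If among `λ₁+3, λ₂+2, λ₃+1, λ₄` the number of even integers is not
exactly 2, then the `GL₄(ℂ)` character with highest weight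
`λ₁ ≥ λ₂ ≥ λ₃ ≥ λ₄` vanishes at every `(t₁, t₂, -t₁, -t₂)` with
`t₁, t₂` nonzero and `t₁² ≠ t₂²`. -/
theorem gl4_char_vanishes (lam : Fin 4 → ℤ) (hlam : Antitone lam)
    (hpar : (univ.filter fun i : Fin 4 =>
        Even (lam i + (3 - (i : ℕ) : ℤ))).card ≠ 2)
    (t₁ t₂ : ℂ) (ht₁ : t₁ ≠ 0) (ht₂ : t₂ ≠ 0) (hne : t₁ ^ 2 ≠ t₂ ^ 2) :
    schurChar 4 lam ![t₁, t₂, -t₁, -t₂] = 0 :=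
  gl4_char_vanishes_general lam hpar t₁ t₂
end

section
/- Let λ = (λ_1 ≥ ... ≥ λ_{mn}) be a dominant integral weight for GL_{mn}(ℂ). If the multiset {λ_i + mn − i : 1 ≤ i ≤ mn} does NOT represent each residue class modulo n exactly m times, then the Schur function s_λ vanishes at every point of the form (ω^j t_i)_{1≤i≤m, 0≤j<n} with t_1,...,t_m nonzero and the mn values ω^j t_i pairwise distinct, where ω is a primitive n-th root of unity. -/
open Finset

/-- The `ρ`-shifted exponents `λ_i + N - i` (1-indexed) of a highest
weight `λ` for `GL_N(ℂ)`. -/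
def expo (N : ℕ) (lam : Fin N → ℤ) (i : Fin N) : ℤ :=
  lam i + (N : ℤ) - 1 - (i : ℕ)

/-- Pigeonhole: if the fibers mod `n` don't all have size exactly `m`,
some fiber has size greater than `m`. -/
lemma exists_big_fiber (m n : ℕ) (hn : 0 < n) (f : Fin (m * n) → ℤ)
    (hres : ¬ ∀ r : ZMod n,
      (univ.filter fun i : Fin (m * n) => ((f i : ZMod n) = r)).card = m) :
    ∃ r : ZMod n,
      m < (univ.filter fun i : Fin (m * n) => ((f i : ZMod n) = r)).card := by
  haveI : NeZero n := ⟨hn.ne'⟩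
  by_contra h
  push_neg at h
  apply hres
  have hsum : ∑ r : ZMod n,
      (univ.filter fun i : Fin (m * n) => ((f i : ZMod n) = r)).card = m * n := by
    rw [← Finset.card_eq_sum_card_fiberwise (fun x _ => mem_univ _)]
    simp
  have h2 : ∑ r : ZMod n,
      (univ.filter fun i : Fin (m * n) => ((f i : ZMod n) = r)).card
      = ∑ _r : ZMod n, m := by
    rw [hsum]; simp [ZMod.card n, mul_comm]
  exact fun r => (Finset.sum_eq_sum_iff_of_le (fun i _ => h i)).mp h2 r (mem_univ r)

/-- The Weyl numerator determinant vanishes when some residue class mod `n`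
contains more than `m` of the shifted exponents. -/
lemma weyl_numerator_det_eq_zero (m n : ℕ) (hn : 0 < n)
    (ω : ℂ) (hω : IsPrimitiveRoot ω n)
    (lam : Fin (m * n) → ℤ)
    (r : ZMod n)
    (hr : m < (univ.filter fun i : Fin (m * n) =>
        ((expo (m * n) lam i : ZMod n) = r)).card)
    (t : Fin m → ℂ) :
    (Matrix.of fun i j : Fin (m*n) => (ω ^ ((finProdFinEquiv.symm j).2 : ℕ) *
          t (finProdFinEquiv.symm j).1) ^ (lam i + ((m*n : ℕ) : ℤ) - 1 - (i : ℕ))).det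
      = 0 := by
  classical
  haveI : NeZero n := ⟨hn.ne'⟩
  have hω0 : ω ≠ 0 := hω.ne_zero hn.ne'
  set e := expo (m*n) lam with he
  set S := univ.filter (fun i : Fin (m*n) => ((e i : ZMod n) = r)) with hS
  have hrank : ¬ LinearIndependent ℂ
      (fun i : S => fun a : Fin m => t a ^ e (i : Fin (m*n))) := by
    intro hli
    have h1 := hli.fintype_card_le_finrank
    rw [Module.finrank_fin_fun, Fintype.card_coe] at h1
    omega
  obtain ⟨g, hg, i₀, hi₀⟩ := Fintype.not_linearIndependent_iff.mp hrank
  set v : Fin (m*n) → ℂ := fun i => if h : i ∈ S then g ⟨i, h⟩ else 0 with hv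
  have hvne : v ≠ 0 := by
    intro h0
    apply hi₀
    have := congrFun h0 i₀.1
    simpa [hv, i₀.2] using this
  have hcommon : ∀ i ∈ S, ω ^ (e i) = ω ^ ((r.val : ℤ)) := by
    intro i hi
    have hmem : (e i : ZMod n) = r := by simpa [hS] using hi
    have hdvd : (n : ℤ) ∣ e i - (r.val : ℤ) := by
      rw [← ZMod.intCast_zmod_eq_zero_iff_dvd]
      push_cast
      simp [hmem, ZMod.natCast_val, ZMod.cast_id]
    obtain ⟨k, hk⟩ := hdvd
    have hei : e i = (r.val : ℤ) + n * k := by linarith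
    rw [hei, zpow_add₀ hω0, _root_.zpow_mul, zpow_natCast ω n, hω.pow_eq_one,
      _root_.one_zpow, mul_one]
  apply Matrix.exists_vecMul_eq_zero_iff.mp
  refine ⟨v, hvne, ?_⟩
  funext j
  set a := (finProdFinEquiv.symm j).1 with ha
  set b := (finProdFinEquiv.symm j).2 with hb
  have hentry : ∀ i ∈ S, (ω ^ (b : ℕ) * t a) ^ (e i)
      = (ω ^ ((r.val : ℤ))) ^ (b : ℕ) * t a ^ e i := by
    intro i hi
    rw [mul_zpow]
    congr 1
    rw [← zpow_natCast ω (b : ℕ), ← _root_.zpow_mul, mul_comm, _root_.zpow_mul,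
      zpow_natCast, hcommon i hi]
  have hga : ∑ i : S, g i * t a ^ e (i : Fin (m*n)) = 0 := by
    have := congrFun hg a
    simpa [Finset.sum_apply] using this
  show ∑ i : Fin (m*n), v i * (ω ^ (b : ℕ) * t a) ^ (e i) = 0
  calc ∑ i : Fin (m*n), v i * (ω ^ (b : ℕ) * t a) ^ (e i)
      = ∑ i ∈ S, v i * (ω ^ (b : ℕ) * t a) ^ (e i) := by
        refine (Finset.sum_subset (subset_univ S) ?_).symm
        intro x _ hx
        simp [hv, hx]
    _ = ∑ i ∈ S.attach, v i.1 * (ω ^ (b : ℕ) * t a) ^ (e i.1) :=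
        (Finset.sum_attach S _).symm
    _ = ∑ i : S, g i * ((ω ^ ((r.val : ℤ))) ^ (b : ℕ) * t a ^ e (i : Fin (m*n))) := by
        apply Finset.sum_congr rfl
        intro i _
        rw [hv]
        simp only [dif_pos i.2]
        rw [hentry i.1 i.2]
    _ = (ω ^ ((r.val : ℤ))) ^ (b : ℕ) * ∑ i : S, g i * t a ^ e (i : Fin (m*n)) := by
        rw [Finset.mul_sum]
        apply Finset.sum_congr rfl
        intro i _
        ring
    _ = 0 := by rw [hga, mul_zero]

/-- If the multiset `{λ_i + mn - i}` does not represent each residue class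
mod `n` exactly `m` times, then the Schur function `s_λ` of `GL_{mn}(ℂ)`
vanishes at every point of the form `(ωʲ tᵢ)` with `t₁, …, t_m` nonzero and
the `mn` values `ωʲ tᵢ` pairwise distinct (`ω` a primitive `n`-th root of
unity). -/
theorem schur_at_coxeter_vanishes (m n : ℕ) (hm : 0 < m) (hn : 0 < n)
    (ω : ℂ) (hω : IsPrimitiveRoot ω n)
    (lam : Fin (m * n) → ℤ) (hlam : Antitone lam)
    (hres : ¬ ∀ r : ZMod n,
      (univ.filter fun i : Fin (m * n) =>
        ((expo (m * n) lam i : ZMod n) = r)).card = m)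
    (t : Fin m → ℂ) (ht : ∀ i, t i ≠ 0)
    (hinj : Function.Injective fun k : Fin (m * n) =>
      ω ^ ((finProdFinEquiv.symm k).2 : ℕ) * t (finProdFinEquiv.symm k).1) :
    schurChar (m * n) lam
        (fun k => ω ^ ((finProdFinEquiv.symm k).2 : ℕ) *
          t (finProdFinEquiv.symm k).1) = 0 := by
  obtain ⟨r, hr⟩ := exists_big_fiber m n hn (expo (m * n) lam) hres
  unfold schurChar
  rw [weyl_numerator_det_eq_zero m n hn ω hω lam r hr t, zero_div]
end

section
/- The complete homogeneous symmetric polynomial h_k in 4m variables evaluated at (t_1,...,t_m, t_1^{-1},...,t_m^{-1}, −t_1,...,−t_m, −t_1^{-1},...,−t_m^{-1}) (with each t_i nonzero) is zero if k is odd, and equals h_ℓ(t_1²,...,t_m², t_1^{-2},...,t_m^{-2}) if k = 2ℓ. -/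
open MvPolynomial

noncomputable def Hval (σ : Type) (w : σ → ℂ) (n : ℕ) : ℂ :=
  ∑ᶠ s : Sym σ n, ((s : Multiset σ).map w).prod

lemma eval_hsymm {σ : Type} [Fintype σ] [DecidableEq σ] (w : σ → ℂ) (n : ℕ) :
    eval w (hsymm σ ℂ n) = Hval σ w n := by
  rw [Hval, finsum_eq_sum_of_fintype, hsymm, map_sum]
  refine Finset.sum_congr rfl fun s _ => ?_
  rw [map_multiset_prod, Multiset.map_map]
  simp [Function.comp]

lemma Hval_zero (σ : Type) (w : σ → ℂ) : Hval σ w 0 = 1 := by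
  rw [Hval, finsum_unique]
  rfl

lemma Hval_isEmpty {σ : Type} [IsEmpty σ] (w : σ → ℂ) {n : ℕ} (hn : n ≠ 0) :
    Hval σ w n = 0 := by
  obtain ⟨n, rfl⟩ := Nat.exists_eq_succ_of_ne_zero hn
  exact finsum_of_isEmpty _

lemma Hval_equiv {σ τ : Type} [Fintype σ] (e : σ ≃ τ) (w : τ → ℂ) (n : ℕ) :
    Hval τ w n = Hval σ (w ∘ e) n := by
  classical
  letI : Fintype τ := Fintype.ofEquiv σ e
  rw [Hval, Hval, finsum_eq_sum_of_fintype, finsum_eq_sum_of_fintype]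
  refine (Fintype.sum_equiv (Sym.equivCongr e) _ _ fun s => ?_).symm
  simp [Sym.equivCongr, Sym.coe_map, Multiset.map_map, Function.comp]

lemma Hval_option {σ : Type} [Fintype σ] (w : Option σ → ℂ) (n : ℕ) :
    Hval (Option σ) w (n + 1) =
      w none * Hval (Option σ) w n + Hval σ (w ∘ some) (n + 1) := by
  classical
  rw [Hval, Hval, Hval, finsum_eq_sum_of_fintype, finsum_eq_sum_of_fintype,
    finsum_eq_sum_of_fintype]
  rw [← Equiv.sum_comp (symOptionSuccEquiv (α := σ)).symm
    (fun s : Sym (Option σ) (n+1) => ((s : Multiset (Option σ)).map w).prod)]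
  rw [Fintype.sum_sum_type]
  congr 1
  · rw [Finset.mul_sum]
    refine Finset.sum_congr rfl fun s _ => ?_
    show ((SymOptionSuccEquiv.decode (Sum.inl s) : Multiset (Option σ)).map w).prod = _
    rw [SymOptionSuccEquiv.decode_inl, Sym.coe_cons, Multiset.map_cons, Multiset.prod_cons]
  · refine Finset.sum_congr rfl fun s _ => ?_
    show ((SymOptionSuccEquiv.decode (Sum.inr s) : Multiset (Option σ)).map w).prod = _
    rw [SymOptionSuccEquiv.decode_inr, Sym.coe_map, Multiset.map_map]
    rfl

def optSumL (α β : Type) : Option (α ⊕ β) ≃ Option α ⊕ β where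
  toFun x := x.elim (Sum.inl none) (Sum.map some id)
  invFun y := y.elim (fun o => o.map Sum.inl) (fun b => some (Sum.inr b))
  left_inv := by rintro (_ | a | b) <;> rfl
  right_inv := by rintro ((_ | a) | b) <;> rfl

def optSumR (α β : Type) : Option (α ⊕ β) ≃ α ⊕ Option β where
  toFun x := x.elim (Sum.inr none) (Sum.map id some)
  invFun y := y.elim (fun a => some (Sum.inl a)) (fun o => o.map Sum.inr)
  left_inv := by rintro (_ | a | b) <;> rfl
  right_inv := by rintro (a | _ | b) <;> rfl

lemma main_lemma (σ : Type) [Fintype σ] : ∀ (v : σ → ℂ) (k : ℕ),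
    (Odd k → Hval (σ ⊕ σ) (Sum.elim v (fun i => -v i)) k = 0) ∧
    (∀ ℓ : ℕ, k = 2 * ℓ → Hval (σ ⊕ σ) (Sum.elim v (fun i => -v i)) k
      = Hval σ (fun i => v i ^ 2) ℓ) := by
  refine Fintype.induction_empty_option
    (P := fun α _ => ∀ (v : α → ℂ) (k : ℕ),
      (Odd k → Hval (α ⊕ α) (Sum.elim v (fun i => -v i)) k = 0) ∧
      (∀ ℓ : ℕ, k = 2 * ℓ → Hval (α ⊕ α) (Sum.elim v (fun i => -v i)) k
        = Hval α (fun i => v i ^ 2) ℓ)) ?_ ?_ ?_ σ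
  · intro α β _ e ih
    intro v k
    letI : Fintype α := Fintype.ofEquiv β e.symm
    have h1 : Hval (β ⊕ β) (Sum.elim v (fun i => -v i)) k
        = Hval (α ⊕ α) (Sum.elim (v ∘ e) (fun i => -(v ∘ e) i)) k := by
      rw [Hval_equiv (Equiv.sumCongr e e)]
      congr 1
      funext x
      rcases x with a | a <;> rfl
    have h2 : ∀ ℓ, Hval β (fun i => v i ^ 2) ℓ = Hval α (fun i => (v ∘ e) i ^ 2) ℓ := by
      intro ℓ
      rw [Hval_equiv e]
      rfl
    rw [h1]
    refine ⟨(ih (v ∘ e) k).1, fun ℓ hℓ => ?_⟩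
    rw [(ih (v ∘ e) k).2 ℓ hℓ, h2]
  · intro v k
    rcases Nat.eq_zero_or_pos k with rfl | hk
    · refine ⟨fun h => absurd h (by simp), fun ℓ hℓ => ?_⟩
      obtain rfl : ℓ = 0 := by omega
      rw [Hval_zero, Hval_zero]
    · have hne : k ≠ 0 := hk.ne'
      refine ⟨fun _ => Hval_isEmpty _ hne, fun ℓ hℓ => ?_⟩
      have hℓne : ℓ ≠ 0 := by omega
      rw [Hval_isEmpty _ hne, Hval_isEmpty _ hℓne]
  · intro τ _ ih
    intro v k
    induction k using Nat.strong_induction_on with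
    | _ k ihk =>
      -- abbreviations
      set a := v none with ha
      have recA : ∀ n : ℕ,
          Hval (Option τ ⊕ Option τ) (Sum.elim v (fun i => -v i)) (n + 1)
          = a * Hval (Option τ ⊕ Option τ) (Sum.elim v (fun i => -v i)) n
            + Hval (τ ⊕ Option τ) (Sum.elim (v ∘ some) (fun i => -v i)) (n + 1) := by
        intro n
        rw [Hval_equiv (optSumL τ (Option τ)), Hval_equiv (optSumL τ (Option τ)) _ n,
          Hval_option]
        have h : ((Sum.elim v fun i => -v i) ∘ ⇑(optSumL τ (Option τ))) ∘ some
            = Sum.elim (v ∘ some) fun i => -v i := by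
          funext x; rcases x with t | o <;> rfl
        rw [h]
        rfl
      have recB : ∀ n : ℕ,
          Hval (τ ⊕ Option τ) (Sum.elim (v ∘ some) (fun i => -v i)) (n + 1)
          = -a * Hval (τ ⊕ Option τ) (Sum.elim (v ∘ some) (fun i => -v i)) n
            + Hval (τ ⊕ τ) (Sum.elim (v ∘ some) (fun i => -(v ∘ some) i)) (n + 1) := by
        intro n
        rw [Hval_equiv (optSumR τ τ), Hval_equiv (optSumR τ τ) _ n, Hval_option]
        have h : ((Sum.elim (v ∘ some) fun i => -v i) ∘ ⇑(optSumR τ τ)) ∘ some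
            = Sum.elim (v ∘ some) fun i => -(v ∘ some) i := by
          funext x; rcases x with t | t <;> rfl
        rw [h]
        rfl
      match k with
      | 0 =>
        refine ⟨fun h => absurd h (by simp), fun ℓ hℓ => ?_⟩
        obtain rfl : ℓ = 0 := by omega
        rw [Hval_zero, Hval_zero]
      | 1 =>
        have hA1 : Hval (Option τ ⊕ Option τ) (Sum.elim v (fun i => -v i)) 1 = 0 := by
          rw [recA 0, recB 0, Hval_zero, Hval_zero, (ih (v ∘ some) 1).1 ⟨0, by ring⟩]
          ring
        exact ⟨fun _ => hA1, fun ℓ hℓ => absurd hℓ (by omega)⟩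
      | (k + 2) =>
        have key : Hval (Option τ ⊕ Option τ) (Sum.elim v (fun i => -v i)) (k + 2)
            = a ^ 2 * Hval (Option τ ⊕ Option τ) (Sum.elim v (fun i => -v i)) k
              + Hval (τ ⊕ τ) (Sum.elim (v ∘ some) (fun i => -(v ∘ some) i)) (k + 2) := by
          have hB : Hval (τ ⊕ Option τ) (Sum.elim (v ∘ some) (fun i => -v i)) (k + 1)
              = Hval (Option τ ⊕ Option τ) (Sum.elim v (fun i => -v i)) (k + 1)
                - a * Hval (Option τ ⊕ Option τ) (Sum.elim v (fun i => -v i)) k := by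
            rw [recA k]; ring
          rw [recA (k + 1), recB (k + 1), hB]; ring
        constructor
        · intro hodd
          have hk : Odd k := by
            rcases hodd with ⟨j, hj⟩; exact ⟨j - 1, by omega⟩
          rw [key, (ihk k (by omega)).1 hk, (ih (v ∘ some) (k + 2)).1 (by
            rcases hk with ⟨j, hj⟩; exact ⟨j + 1, by omega⟩)]
          ring
        · intro ℓ hℓ
          obtain ⟨ℓ', rfl⟩ : ∃ ℓ', ℓ = ℓ' + 1 := ⟨ℓ - 1, by omega⟩
          have hkℓ : k = 2 * ℓ' := by omega
          rw [key, (ihk k (by omega)).2 ℓ' hkℓ,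
            (ih (v ∘ some) (k + 2)).2 (ℓ' + 1) (by omega)]
          rw [Hval_option (fun i => v i ^ 2) ℓ']
          rfl

/-- The complete homogeneous symmetric polynomial `h_k` in `4m` variables
evaluated at `(t₁, …, t_m, t₁⁻¹, …, t_m⁻¹, -t₁, …, -t_m, -t₁⁻¹, …, -t_m⁻¹)`
(with each `tᵢ ≠ 0`) is `0` for `k` odd, and equals
`h_ℓ(t₁², …, t_m², t₁⁻², …, t_m⁻²)` for `k = 2ℓ`. -/
theorem hsymm_eval_symplectic (m k : ℕ) (t : Fin m → ℂ) (ht : ∀ i, t i ≠ 0) :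
    (Odd k →
      eval (Sum.elim (Sum.elim t (fun i => (t i)⁻¹))
          (Sum.elim (fun i => -t i) (fun i => -(t i)⁻¹)))
        (hsymm ((Fin m ⊕ Fin m) ⊕ (Fin m ⊕ Fin m)) ℂ k) = 0) ∧
    ∀ ℓ : ℕ, k = 2 * ℓ →
      eval (Sum.elim (Sum.elim t (fun i => (t i)⁻¹))
          (Sum.elim (fun i => -t i) (fun i => -(t i)⁻¹)))
        (hsymm ((Fin m ⊕ Fin m) ⊕ (Fin m ⊕ Fin m)) ℂ k) =
      eval (Sum.elim (fun i => t i ^ 2) (fun i => (t i)⁻¹ ^ 2))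
        (hsymm (Fin m ⊕ Fin m) ℂ ℓ) := by
  set v : Fin m ⊕ Fin m → ℂ := Sum.elim t (fun i => (t i)⁻¹) with hv
  have h1 : (Sum.elim (Sum.elim t (fun i => (t i)⁻¹))
      (Sum.elim (fun i => -t i) (fun i => -(t i)⁻¹)))
      = Sum.elim v (fun i => -v i) := by
    funext x; rcases x with (i | i) | (i | i) <;> rfl
  have h2 : (Sum.elim (fun i => t i ^ 2) (fun i => (t i)⁻¹ ^ 2))
      = fun i => v i ^ 2 := by
    funext x; rcases x with i | i <;> rfl
  rw [h1, h2]
  simp only [eval_hsymm]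
  exact main_lemma (Fin m ⊕ Fin m) v k
end

section
/- Let λ = (λ_1 ≥ ... ≥ λ_N) be a dominant integral weight for GL_N(ℂ) and let c_N = diag(1, ω, ω², ..., ω^{N−1}) with ω a primitive N-th root of unity be the Coxeter element. Then the character Θ_λ(c_N) of the irreducible representation with highest weight λ at c_N lies in {−1, 0, 1}; it is nonzero if and only if the integers λ_i + N − i, i = 1,...,N, form a complete set of residues modulo N. -/
open Finset
open Matrix

lemma zpow_congr_mod {N : ℕ} (hN : 0 < N) {ω : ℂ} (hω : IsPrimitiveRoot ω N)
    {a b : ℤ} (h : (N : ℤ) ∣ a - b) : ω ^ a = ω ^ b := by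
  have h0 : ω ≠ 0 := hω.ne_zero hN.ne'
  have h1 : ω ^ (a - b) = 1 := (hω.zpow_eq_one_iff_dvd _).2 h
  calc ω ^ a = ω ^ (a - b + b) := by ring_nf
    _ = ω ^ (a - b) * ω ^ b := zpow_add₀ h0 _ _
    _ = ω ^ b := by rw [h1, one_mul]


/-- Kostant's theorem for `GL_N(ℂ)`: the character of the irreducible
representation with highest weight `λ₁ ≥ ⋯ ≥ λ_N` at the Coxeter element
`diag(1, ω, …, ω^(N-1))` (`ω` a primitive `N`-th root of unity) lies in
`{-1, 0, 1}`, and is nonzero if and only if the shifted exponents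
`λᵢ + N - i` form a complete set of residues modulo `N`. -/
theorem kostant_glN (N : ℕ) (hN : 0 < N) (ω : ℂ) (hω : IsPrimitiveRoot ω N)
    (lam : Fin N → ℤ) (hlam : Antitone lam) :
    (schurChar N lam (fun j => ω ^ (j : ℕ)) = 1 ∨
     schurChar N lam (fun j => ω ^ (j : ℕ)) = 0 ∨
     schurChar N lam (fun j => ω ^ (j : ℕ)) = -1) ∧
    (schurChar N lam (fun j => ω ^ (j : ℕ)) ≠ 0 ↔
      Function.Bijective fun i : Fin N => ((expo N lam i : ZMod N))) := by
  haveI : NeZero N := ⟨hN.ne'⟩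
  have hω0 : ω ≠ 0 := hω.ne_zero hN.ne'
  set x : Fin N → ℂ := fun j => ω ^ (j : ℕ) with hx
  -- denominator nonzero
  have hD : (∏ i : Fin N, ∏ j ∈ Ioi i, (x i - x j)) ≠ 0 := by
    rw [Finset.prod_ne_zero_iff]
    intro i _
    rw [Finset.prod_ne_zero_iff]
    intro j hj
    refine sub_ne_zero.2 fun h => ?_
    have : (i : ℕ) = j := hω.pow_inj i.isLt j.isLt h
    exact absurd (Fin.ext this) (Finset.mem_Ioi.1 hj).ne
  -- power congruence for entries
  have hxc : ∀ (j : Fin N) {a b : ℤ}, (N : ℤ) ∣ a - b → x j ^ a = x j ^ b := by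
    intro j a b h
    have hxj : x j = ω ^ ((j : ℕ) : ℤ) := by simp [hx]
    rw [hxj, ← _root_.zpow_mul, ← _root_.zpow_mul]
    refine zpow_congr_mod hN hω ?_
    have : ((j : ℕ) : ℤ) * a - ((j : ℕ) : ℤ) * b = ((j : ℕ) : ℤ) * (a - b) := by ring
    rw [this]; exact Dvd.dvd.mul_left h _
  by_cases hinj : Function.Injective fun i : Fin N => ((expo N lam i : ZMod N))
  · -- injective case
    have hbij : Function.Bijective fun i : Fin N => ((expo N lam i : ZMod N)) := by
      rw [Fintype.bijective_iff_injective_and_card]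
      exact ⟨hinj, by simp [ZMod.card]⟩
    have hτinj : Function.Injective fun k : Fin N => (-1 - (k : ℕ) : ZMod N) := by
      intro k k' h
      simp only [sub_right_inj] at h
      have h' : ((k : ℕ) : ZMod N) = ((k' : ℕ) : ZMod N) := h
      have := congrArg ZMod.val h'
      rwa [ZMod.val_natCast_of_lt k.isLt, ZMod.val_natCast_of_lt k'.isLt, ← Fin.ext_iff] at this
    have hτbij : Function.Bijective fun k : Fin N => (-1 - (k : ℕ) : ZMod N) := by
      rw [Fintype.bijective_iff_injective_and_card]
      exact ⟨hτinj, by simp [ZMod.card]⟩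
    set τ : Fin N ≃ ZMod N := Equiv.ofBijective _ hτbij with hτ
    set σ : Equiv.Perm (Fin N) :=
      Equiv.ofBijective (fun i => τ.symm ((expo N lam i : ZMod N)))
        (by
          rw [Fintype.bijective_iff_injective_and_card]
          exact ⟨fun a b h => hinj (by simpa using congrArg τ h), rfl⟩) with hσ
    have hkey : ∀ i : Fin N, (N : ℤ) ∣ expo N lam i - ((N : ℤ) - 1 - (σ i : ℕ)) := by
      intro i
      have h1 : ((expo N lam i : ZMod N)) = -1 - ((σ i : ℕ) : ZMod N) := by
        have := τ.apply_symm_apply ((expo N lam i : ZMod N))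
        simpa [hσ, hτ, Equiv.ofBijective] using this.symm
      have h2 : ((expo N lam i - ((N : ℤ) - 1 - (σ i : ℕ)) : ℤ) : ZMod N) = 0 := by
        push_cast
        rw [h1]
        simp [ZMod.natCast_self]
      exact (ZMod.intCast_zmod_eq_zero_iff_dvd _ _).1 h2
    set B : Matrix (Fin N) (Fin N) ℂ :=
      Matrix.of (fun k j : Fin N => x j ^ ((N - 1 - (k : ℕ) : ℕ))) with hB
    have hAB : (Matrix.of fun i j : Fin N => x j ^ (lam i + (N : ℤ) - 1 - (i : ℕ)))
        = B.submatrix σ id := by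
      ext i j
      have hexp : lam i + (N : ℤ) - 1 - (i : ℕ) = expo N lam i := rfl
      have hcast : (((N - 1 - (σ i : ℕ) : ℕ)) : ℤ) = (N : ℤ) - 1 - ((σ i : ℕ) : ℤ) := by
        have := (σ i).isLt; omega
      simp only [Matrix.of_apply, Matrix.submatrix_apply, hB, id]
      rw [hexp, hxc j (hkey i), ← hcast, zpow_natCast]
    -- det B = ± denominator
    set m : ℕ := ∑ i : Fin N, (Ioi i).card with hm
    have hBdet : B.det = ((Equiv.Perm.sign (Fin.revPerm : Equiv.Perm (Fin N)) : ℤ) : ℂ) *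
        ((-1 : ℂ) ^ m) * ∏ i : Fin N, ∏ j ∈ Ioi i, (x i - x j) := by
      have h1 : B = ((Matrix.vandermonde x).submatrix id (Fin.revPerm : Equiv.Perm (Fin N)))ᵀ := by
        ext k j
        simp only [hB, Matrix.of_apply, Matrix.transpose_apply, Matrix.submatrix_apply,
          id_eq, Matrix.vandermonde_apply, Fin.revPerm_apply, Fin.val_rev]
        congr 1
        omega
      rw [h1, Matrix.det_transpose, Matrix.det_permute', Matrix.det_vandermonde]
      have h2 : ∏ i : Fin N, ∏ j ∈ Ioi i, (x j - x i)
          = ((-1 : ℂ) ^ m) * ∏ i : Fin N, ∏ j ∈ Ioi i, (x i - x j) := by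
        have hi : ∀ i : Fin N, ∏ j ∈ Ioi i, (x j - x i)
            = (-1 : ℂ) ^ (Ioi i).card * ∏ j ∈ Ioi i, (x i - x j) := by
          intro i
          rw [← Finset.prod_const, ← Finset.prod_mul_distrib]
          exact Finset.prod_congr rfl fun j _ => by ring
        rw [Finset.prod_congr rfl fun i _ => hi i, Finset.prod_mul_distrib,
          Finset.prod_pow_eq_pow_sum, hm]
      rw [h2]; ring
    have hval : schurChar N lam x = ((Equiv.Perm.sign σ : ℤ) : ℂ) *
        (((Equiv.Perm.sign (Fin.revPerm : Equiv.Perm (Fin N)) : ℤ) : ℂ) * (-1 : ℂ) ^ m) := by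
      rw [schurChar, hAB, Matrix.det_permute, hBdet]
      field_simp
    have hpm : schurChar N lam x = 1 ∨ schurChar N lam x = -1 := by
      rcases Int.units_eq_one_or (Equiv.Perm.sign σ) with h1 | h1 <;>
        rcases Int.units_eq_one_or (Equiv.Perm.sign (Fin.revPerm : Equiv.Perm (Fin N))) with h2 | h2 <;>
          rcases Nat.even_or_odd m with h3 | h3 <;>
            simp [hval, h1, h2, h3.neg_one_pow]
    have hne : schurChar N lam x ≠ 0 := by
      rcases hpm with h | h <;> rw [h] <;> norm_num
    exact ⟨hpm.imp id (fun h => Or.inr h), ⟨fun _ => hbij, fun _ => hne⟩⟩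
  · -- non-injective case
    obtain ⟨a, b, hab, hne⟩ : ∃ a b, ((expo N lam a : ZMod N)) = ((expo N lam b : ZMod N)) ∧ a ≠ b := by
      simp only [Function.Injective, not_forall] at hinj
      obtain ⟨a, b, h1, h2⟩ := hinj
      exact ⟨a, b, h1, h2⟩
    have hdvd : (N : ℤ) ∣ expo N lam a - expo N lam b := by
      have : ((expo N lam a - expo N lam b : ℤ) : ZMod N) = 0 := by push_cast [hab]; ring
      exact (ZMod.intCast_zmod_eq_zero_iff_dvd _ _).1 this
    have hdet : (Matrix.of fun i j : Fin N => x j ^ (lam i + (N : ℤ) - 1 - (i : ℕ))).det = 0 := by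
      apply Matrix.det_zero_of_row_eq hne
      ext j
      simp only [Matrix.of_apply]
      exact hxc j hdvd
    have h0 : schurChar N lam x = 0 := by
      rw [schurChar, hdet, zero_div]
    refine ⟨Or.inr (Or.inl h0), ?_⟩
    constructor
    · intro h; exact absurd h0 h
    · intro h; exact absurd h.injective hinj
end
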